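/- For every k ≥ 10, any strong resolving set of the generalized Petersen graph GP(4k,2) has cardinality at least 5k. -/

import Mathlib

/-- A vertex `w` strongly resolves vertices `u` and `v` in graph `G`:
`u` lies on a shortest `v`–`w` path or `v` lies on a shortest `u`–`w` path,
equivalently via distances. -/
def StronglyResolves {V : Type*} (G : SimpleGraph V) (w u v : V) : Prop :=
  G.dist w u = G.dist w v + G.dist v u ∨ G.dist w v = G.dist w u + G.dist u v

/-- `S` is a strong resolving set of `G`. -/
def IsStrongResolvingSet {V : Type*} (G : SimpleGraph V) (S : Set V) : Prop :=
  ∀ u v : V, u ≠ v → ∃ w ∈ S, StronglyResolves G w u v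

/-- The strong metric dimension: minimum cardinality of a strong resolving set. -/
noncomputable def sdim {V : Type*} (G : SimpleGraph V) : ℕ :=
  sInf {m : ℕ | ∃ S : Set V, IsStrongResolvingSet G S ∧ S.ncard = m}

/-- Mutually maximally distant vertices. -/
def MutuallyMaximallyDistant {V : Type*} (G : SimpleGraph V) (u v : V) : Prop :=
  u ≠ v ∧ (∀ w : V, G.Adj u w → G.dist w v ≤ G.dist u v) ∧
    (∀ w : V, G.Adj v w → G.dist u w ≤ G.dist u v)

/-- The generalized Petersen graph `GP n k`, with outer vertices `Sum.inl i` (the `uᵢ`)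
and inner vertices `Sum.inr i` (the `vᵢ`), indices in `ZMod n`. -/
def GP (n k : ℕ) : SimpleGraph (ZMod n ⊕ ZMod n) where
  Adj x y := match x, y with
    | Sum.inl i, Sum.inl j => i ≠ j ∧ (j = i + 1 ∨ i = j + 1)
    | Sum.inl i, Sum.inr j => i = j
    | Sum.inr i, Sum.inl j => i = j
    | Sum.inr i, Sum.inr j => i ≠ j ∧ (j = i + (k : ZMod n) ∨ i = j + (k : ZMod n))
  symm := ⟨by rintro (i|i) (j|j) h <;> simp_all <;> tauto⟩
  loopless := ⟨by rintro (i|i) h <;> simp_all⟩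

/-!
A vertex that strongly resolves a mutually maximally distant (MMD) pair must belong to the pair,
so a strong resolving set meets every MMD pair. In `GP(4k, 2)` the pairs `v_b, v_{b+2k-1}` are
MMD; since `(2k-1)² ≡ 1 (mod 4k)`, they form a single `4k`-cycle on the inner vertices, and
covering it costs `2k` vertices. On the outer rim `u_b, u_{b+2k}` and `u_b, u_{b+t}` for odd
`5 ≤ t < 2k` are MMD, so the set `A` of outer vertices missed has no antipodal pair and no odd
gap other than `±1, ±3`. If `A` contains both parities it lies within distance `3` of one vertex
of each parity, so `|A| ≤ 8`; otherwise `a ↦ ⌊a/2⌋ mod k` is injective on `A`. Hence at least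
`3k` outer vertices are taken, and `5k` in total.

Distances are bounded above by explicit walks and below by potentials that change by at most
one along every edge.
-/

namespace SimpleGraph

variable {V W : Type*} {G : SimpleGraph V} {G' : SimpleGraph W} {u v w x : V}

lemma edist_map_le (f : G →g G') (u v : V) : G'.edist (f u) (f v) ≤ G.edist u v := by
  by_cases h : G.Reachable u v
  · obtain ⟨p, hp⟩ := h.exists_walk_length_eq_edist
    rw [← hp]
    exact (edist_le (p.map f)).trans (by simp)
  · simp [edist_eq_top_of_not_reachable h]

lemma Iso.dist_eq (φ : G ≃g G') (u v : V) : G'.dist (φ u) (φ v) = G.dist u v := by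
  have h : G'.edist (φ u) (φ v) = G.edist u v :=
    le_antisymm (edist_map_le φ.toHom u v) (by simpa using edist_map_le φ.symm.toHom (φ u) (φ v))
  simp only [dist, h]

lemma dist_le_one_of_adj_or_eq (h : G.Adj u v ∨ u = v) : G.dist u v ≤ 1 := by
  rcases h with h | rfl
  · exact (dist_eq_one_iff_adj.2 h).le
  · simp

lemma Connected.dist_le_add_add (hc : G.Connected) :
    G.dist u x ≤ G.dist u v + G.dist v w + G.dist w x :=
  hc.dist_triangle.trans (add_le_add_left hc.dist_triangle _)

lemma Reachable.exists_adj_dist_add_one_le (h : G.Reachable v w) (hne : v ≠ w) :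
    ∃ x, G.Adj v x ∧ G.dist x w + 1 ≤ G.dist v w := by
  obtain ⟨p, hp⟩ := h.exists_walk_length_eq_dist
  cases p with
  | nil => exact absurd rfl hne
  | cons hadj q => exact ⟨_, hadj, by simpa [← hp] using dist_le q⟩

lemma Walk.apply_le_apply_add_length {f : V → ℕ} (hf : ∀ x y, G.Adj x y → f x ≤ f y + 1)
    (p : G.Walk u v) : f u ≤ f v + p.length := by
  induction p with
  | nil => simp
  | cons hadj _ ih => have := hf _ _ hadj; simp only [length_cons]; omega

lemma Reachable.apply_le_apply_add_dist {f : V → ℕ} (hf : ∀ x y, G.Adj x y → f x ≤ f y + 1)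
    (h : G.Reachable u v) : f u ≤ f v + G.dist u v := by
  obtain ⟨p, hp⟩ := h.exists_walk_length_eq_dist
  simpa [hp] using p.apply_le_apply_add_length hf

end SimpleGraph

open SimpleGraph

section MutuallyMaximallyDistant

variable {V : Type*} {G : SimpleGraph V} {u v w : V}

lemma MutuallyMaximallyDistant.symm (h : MutuallyMaximallyDistant G u v) :
    MutuallyMaximallyDistant G v u := by
  obtain ⟨hne, hu, hv⟩ := h
  refine ⟨hne.symm, fun x hx => ?_, fun x hx => ?_⟩
  · simpa [dist_comm] using hv x hx
  · simpa [dist_comm] using hu x hx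

/-- A shortest `w`–`u` path through `v` could be rerouted through a neighbour of `v` closer
to `w`, contradicting maximality of `v` as seen from `u`. -/
lemma MutuallyMaximallyDistant.eq_of_dist_eq_dist_add (hc : G.Connected)
    (h : MutuallyMaximallyDistant G u v) (hw : G.dist w u = G.dist w v + G.dist v u) :
    w = v := by
  by_contra hwv
  obtain ⟨x, hvx, hxw⟩ := (hc.preconnected v w).exists_adj_dist_add_one_le (Ne.symm hwv)
  have hux := h.2.2 x hvx
  have htri : G.dist w u ≤ G.dist w x + G.dist x u := hc.dist_triangle
  rw [dist_comm (u := w) (v := x), dist_comm (u := x) (v := u)] at htri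
  rw [dist_comm (u := w) (v := v), dist_comm (u := v) (v := u)] at hw
  omega

lemma MutuallyMaximallyDistant.eq_or_eq_of_stronglyResolves (hc : G.Connected)
    (h : MutuallyMaximallyDistant G u v) (hw : StronglyResolves G w u v) : w = u ∨ w = v := by
  rcases hw with hw | hw
  · exact .inr (h.eq_of_dist_eq_dist_add hc hw)
  · exact .inl (h.symm.eq_of_dist_eq_dist_add hc hw)

lemma IsStrongResolvingSet.mem_or_mem {S : Set V} (hS : IsStrongResolvingSet G S)
    (hc : G.Connected) (h : MutuallyMaximallyDistant G u v) : u ∈ S ∨ v ∈ S := by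
  obtain ⟨w, hwS, hw⟩ := hS u v h.1
  rcases h.eq_or_eq_of_stronglyResolves hc hw with rfl | rfl
  exacts [.inl hwS, .inr hwS]

lemma mutuallyMaximallyDistant_of_swap (φ : G ≃g G) (hu : φ u = v) (hv : φ v = u) (hne : u ≠ v)
    (h : ∀ x, G.Adj u x → G.dist x v ≤ G.dist u v) : MutuallyMaximallyDistant G u v := by
  refine ⟨hne, h, fun x hx => ?_⟩
  have hφx : G.Adj u (φ x) := by simpa [hv] using φ.map_rel_iff.mpr hx
  calc G.dist u x = G.dist (φ x) v := by rw [← φ.dist_eq, hu, dist_comm]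
    _ ≤ G.dist u v := h _ hφx

end MutuallyMaximallyDistant

lemma Nat.eq_or_eq_add_of_mod_eq {h x y : ℕ} (hx : x < 2 * h) (hy : y < 2 * h)
    (hxy : x % h = y % h) : x = y ∨ x = y + h ∨ y = x + h := by
  have hmod {z : ℕ} (hz : z < 2 * h) : z % h = if z < h then z else z - h := by
    split_ifs with hzh
    · exact Nat.mod_eq_of_lt hzh
    · rw [Nat.mod_eq_sub_mod (by omega), Nat.mod_eq_of_lt (by omega)]
  rw [hmod hx, hmod hy] at hxy
  split_ifs at hxy <;> omega

namespace ZMod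

lemma natCast_ne_zero_of_pos_of_lt {n t : ℕ} (h0 : 0 < t) (ht : t < n) : (t : ZMod n) ≠ 0 := by
  rw [Ne, natCast_eq_zero_iff]
  exact Nat.not_dvd_of_pos_of_lt h0 ht

variable {n : ℕ} [NeZero n]

lemma val_add_eq_or (i j : ZMod n) :
    (i + j).val = i.val + j.val ∨ (i + j).val + n = i.val + j.val := by
  rcases lt_or_ge (i.val + j.val) n with h | h
  · exact .inl (ZMod.val_add_of_lt h)
  · have := ZMod.val_add_of_le h
    have := ZMod.val_lt i
    have := ZMod.val_lt j
    omega

lemma val_sub_mod_two (hn : Even n) (a b : ZMod n) : (b - a).val % 2 = (b.val + a.val) % 2 := by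
  obtain ⟨h, rfl⟩ := hn
  have := val_add_eq_or (b - a) a
  rw [sub_add_cancel] at this
  omega

end ZMod

lemma even_four_mul (k : ℕ) : Even (4 * k) := ⟨2 * k, by ring⟩

section CycleCover

variable {n : ℕ} {T : Finset (ZMod n)}

lemma le_two_mul_card_of_forall_mem_or_add_one_mem (hn : Even n) (h : ∀ i, i ∈ T ∨ i + 1 ∈ T) :
    n ≤ 2 * T.card := by
  obtain ⟨m, rfl⟩ := hn
  rcases Nat.eq_zero_or_pos m with rfl | hm
  · exact Nat.zero_le _
  have : NeZero (m + m) := ⟨by omega⟩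
  have hsurj : Set.SurjOn (fun x : ZMod (m + m) => x.val / 2) T (Finset.range m) := by
    intro t ht
    rw [Finset.coe_range, Set.mem_Iio] at ht
    rcases h (2 * t : ℕ) with h0 | h1
    · exact ⟨_, h0, by simp only [ZMod.val_natCast_of_lt (by omega : 2 * t < m + m)]; omega⟩
    · refine ⟨_, h1, ?_⟩
      rw [← Nat.cast_succ]
      simp only [ZMod.val_natCast_of_lt (by omega : 2 * t + 1 < m + m)]
      omega
  have := Finset.card_le_card_of_surjOn _ hsurj
  rw [Finset.card_range] at this
  omega

/-- Multiplication by `d⁻¹` turns the pairs `{b, b + d}` into the pairs `{i, i + 1}`. -/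
lemma le_two_mul_card_of_forall_mem_or_add_mem (hn : Even n) {d : ZMod n} (hd : IsUnit d)
    (h : ∀ b, b ∈ T ∨ b + d ∈ T) : n ≤ 2 * T.card := by
  classical
  obtain ⟨u, rfl⟩ := hd
  refine (le_two_mul_card_of_forall_mem_or_add_one_mem hn
    (T := T.image fun x => (↑u⁻¹ : ZMod n) * x) fun i => ?_).trans
    (Nat.mul_le_mul_left 2 Finset.card_image_le)
  rcases h (u * i) with h | h
  · exact .inl (Finset.mem_image.2 ⟨_, h, by simp⟩)
  · refine .inr (Finset.mem_image.2 ⟨_, h, ?_⟩)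
    rw [mul_add, Units.inv_mul_cancel_left, Units.inv_mul]

end CycleCover

namespace GP

variable {n k : ℕ}

def reflect (n k : ℕ) (c : ZMod n) : GP n k ≃g GP n k where
  toEquiv := Equiv.sumCongr (Equiv.subLeft c) (Equiv.subLeft c)
  map_rel_iff' := by
    rintro (i | i) (j | j) <;> simp only [GP, Equiv.sumCongr_apply, Sum.map_inl, Sum.map_inr,
      Equiv.subLeft_apply] <;> grind

@[simp] lemma reflect_inl (c i : ZMod n) : reflect n k c (.inl i) = .inl (c - i) := rfl
@[simp] lemma reflect_inr (c i : ZMod n) : reflect n k c (.inr i) = .inr (c - i) := rfl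

lemma adj_inl_inr (i : ZMod n) : (GP n k).Adj (.inl i) (.inr i) := rfl

lemma adj_or_eq_inl_add_one (i : ZMod n) :
    (GP n k).Adj (.inl i) (.inl (i + 1)) ∨ (.inl i : ZMod n ⊕ ZMod n) = .inl (i + 1) := by
  by_cases h : i = i + 1
  · exact .inr (congrArg _ h)
  · exact .inl ⟨h, .inl rfl⟩

lemma adj_or_eq_inr_add (i : ZMod n) :
    (GP n k).Adj (.inr i) (.inr (i + k)) ∨ (.inr i : ZMod n ⊕ ZMod n) = .inr (i + k) := by
  by_cases h : i = i + k
  · exact .inr (congrArg _ h)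
  · exact .inl ⟨h, .inl rfl⟩

lemma reachable_inl_add (i : ZMod n) (t : ℕ) :
    (GP n k).Reachable (.inl i) (.inl (i + (t : ZMod n))) := by
  induction t with
  | zero => simp
  | succ t ih =>
    refine ih.trans ?_
    rw [Nat.cast_succ, ← add_assoc]
    rcases adj_or_eq_inl_add_one (k := k) (i + (t : ZMod n)) with h | h
    exacts [h.reachable, h ▸ .rfl]

lemma connected [NeZero n] : (GP n k).Connected := by
  refine (SimpleGraph.connected_iff_exists_forall_reachable _).2 ⟨.inl 0, ?_⟩
  have hinl (i : ZMod n) : (GP n k).Reachable (.inl 0) (.inl i) := by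
    simpa using reachable_inl_add (k := k) (0 : ZMod n) i.val
  rintro (i | i)
  exacts [hinl i, (hinl i).trans (adj_inl_inr i).reachable]

lemma dist_inl_inr_le_one (i : ZMod n) : (GP n k).dist (.inl i) (.inr i) ≤ 1 :=
  dist_le_one_of_adj_or_eq (.inl (adj_inl_inr i))

lemma mmd_inl_of_forall_adj {b c : ZMod n} (hc : c ≠ 0) (h : ∀ x, (GP n k).Adj (.inl b) x →
      (GP n k).dist x (.inl (b + c)) ≤ (GP n k).dist (.inl b) (.inl (b + c))) :
    MutuallyMaximallyDistant (GP n k) (.inl b) (.inl (b + c)) :=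
  mutuallyMaximallyDistant_of_swap (reflect n k (b + b + c))
    (by rw [reflect_inl, add_sub_right_comm, add_sub_cancel_right]) (by simp)
    (by simpa using hc) h

lemma mmd_inr_of_forall_adj {b c : ZMod n} (hc : c ≠ 0) (h : ∀ x, (GP n k).Adj (.inr b) x →
      (GP n k).dist x (.inr (b + c)) ≤ (GP n k).dist (.inr b) (.inr (b + c))) :
    MutuallyMaximallyDistant (GP n k) (.inr b) (.inr (b + c)) :=
  mutuallyMaximallyDistant_of_swap (reflect n k (b + b + c))
    (by rw [reflect_inr, add_sub_right_comm, add_sub_cancel_right]) (by simp)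
    (by simpa using hc) h

section Metric

variable [NeZero n]

lemma dist_inl_add_le (i : ZMod n) (t : ℕ) :
    (GP n k).dist (.inl i) (.inl (i + (t : ZMod n))) ≤ t := by
  induction t with
  | zero => simp
  | succ t ih =>
    have hstep := dist_le_one_of_adj_or_eq (adj_or_eq_inl_add_one (k := k) (i + (t : ZMod n)))
    rw [Nat.cast_succ, ← add_assoc]
    exact (connected.dist_triangle (v := .inl (i + (t : ZMod n)))).trans (by omega)

lemma dist_inr_add_mul_le (i : ZMod n) (t : ℕ) :
    (GP n k).dist (.inr i) (.inr (i + (t : ZMod n) * (k : ZMod n))) ≤ t := by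
  induction t with
  | zero => simp
  | succ t ih =>
    have hstep := dist_le_one_of_adj_or_eq
      (adj_or_eq_inr_add (k := k) (i + (t : ZMod n) * (k : ZMod n)))
    rw [Nat.cast_succ, add_one_mul, ← add_assoc]
    exact (connected.dist_triangle (v := .inr (i + (t : ZMod n) * (k : ZMod n)))).trans (by omega)

lemma dist_inr_inl_le {i j : ZMod n} (s r : ℕ) (hj : j = i + 2 * s + r) :
    (GP n 2).dist (.inr i) (.inl j) ≤ s + 1 + r := by
  subst hj
  calc _ ≤ (GP n 2).dist (.inr i) (.inr (i + (s : ZMod n) * ((2 : ℕ) : ZMod n)))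
        + (GP n 2).dist (.inr (i + 2 * s)) (.inl (i + 2 * s))
        + (GP n 2).dist (.inl (i + 2 * s)) (.inl (i + 2 * s + (r : ZMod n))) := by
        rw [Nat.cast_ofNat, mul_comm]; exact connected.dist_le_add_add
    _ ≤ s + 1 + r := by
      gcongr
      exacts [dist_inr_add_mul_le i s, dist_comm.trans_le (dist_inl_inr_le_one _),
        dist_inl_add_le _ r]

lemma dist_inl_inl_le {i j : ZMod n} (s r : ℕ) (hj : j = i + 2 * s + r) :
    (GP n 2).dist (.inl i) (.inl j) ≤ s + 2 + r :=
  calc _ ≤ (GP n 2).dist (.inl i) (.inr i) + (GP n 2).dist (.inr i) (.inl j) :=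
        connected.dist_triangle
    _ ≤ 1 + (s + 1 + r) := add_le_add (dist_inl_inr_le_one i) (dist_inr_inl_le s r hj)
    _ = s + 2 + r := by ring

lemma dist_inr_inr_le {i j : ZMod n} (s : ℕ) (hj : j = i + 2 * s + 1) :
    (GP n 2).dist (.inr i) (.inr j) ≤ s + 3 :=
  calc _ ≤ (GP n 2).dist (.inr i) (.inl j) + (GP n 2).dist (.inl j) (.inr j) :=
        connected.dist_triangle
    _ ≤ (s + 1 + 1) + 1 :=
        add_le_add (dist_inr_inl_le s 1 (by rw [hj, Nat.cast_one])) (dist_inl_inr_le_one _)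

end Metric

def circNorm (i : ZMod n) : ℕ := min i.val (n - i.val)

-- For `t ≤ n / 2` these are the distances in `GP n 2` from `u₀` to `u_t`, from `u₀` to `v_t`
-- and from `v₀` to `v_t`.
def distUU (t : ℕ) : ℕ := if t < 4 then t else t / 2 + 2 + t % 2

def distUV (t : ℕ) : ℕ := t / 2 + 1 + t % 2

def distVV (t : ℕ) : ℕ := if t % 2 = 0 then t / 2 else t / 2 + 3

def potU (b : ZMod n) : ZMod n ⊕ ZMod n → ℕ
  | .inl i => distUU (circNorm (i - b))
  | .inr i => distUV (circNorm (i - b))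

def potV (b : ZMod n) : ZMod n ⊕ ZMod n → ℕ
  | .inl i => distUV (circNorm (i - b))
  | .inr i => distVV (circNorm (i - b))

section Potentials

variable [NeZero n] (he : Even n) (hn : 2 < n)
include he hn

lemma circNorm_add_one (i : ZMod n) :
    circNorm (i + 1) = circNorm i + 1 ∨ circNorm i = circNorm (i + 1) + 1 := by
  have h1 : (1 : ZMod n).val = 1 := ZMod.val_one'' (by omega)
  obtain ⟨h, rfl⟩ := he
  have := ZMod.val_add_eq_or i 1
  have := ZMod.val_lt i
  have := ZMod.val_lt (i + 1)
  simp only [circNorm]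
  omega

lemma circNorm_add_two (i : ZMod n) :
    circNorm (i + 2) = circNorm i ∨ circNorm (i + 2) = circNorm i + 2 ∨
      circNorm i = circNorm (i + 2) + 2 := by
  have h2 : (2 : ZMod n).val = 2 := ZMod.val_ofNat_of_lt hn
  obtain ⟨h, rfl⟩ := he
  have := ZMod.val_add_eq_or i 2
  have := ZMod.val_lt i
  have := ZMod.val_lt (i + 2)
  simp only [circNorm]
  omega

lemma circNorm_of_adj_inl {i j : ZMod n} (b : ZMod n)
    (hadj : (GP n 2).Adj (.inl i) (.inl j)) :
    circNorm (j - b) = circNorm (i - b) + 1 ∨ circNorm (i - b) = circNorm (j - b) + 1 := by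
  obtain ⟨-, rfl | rfl⟩ := hadj
  · simpa only [add_sub_right_comm] using circNorm_add_one he hn (i - b)
  · simpa only [add_sub_right_comm, or_comm] using circNorm_add_one he hn (j - b)

lemma circNorm_of_adj_inr {i j : ZMod n} (b : ZMod n)
    (hadj : (GP n 2).Adj (.inr i) (.inr j)) :
    circNorm (j - b) = circNorm (i - b) ∨ circNorm (j - b) = circNorm (i - b) + 2 ∨
      circNorm (i - b) = circNorm (j - b) + 2 := by
  obtain ⟨-, rfl | rfl⟩ := hadj
  · simpa only [Nat.cast_ofNat, add_sub_right_comm] using circNorm_add_two he hn (i - b)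
  · have := circNorm_add_two he hn (j - b)
    simp only [Nat.cast_ofNat, add_sub_right_comm] at this ⊢
    omega

lemma potU_le_potU_add_one (b : ZMod n) :
    ∀ x y, (GP n 2).Adj x y → potU b x ≤ potU b y + 1 := by
  rintro (i | i) (j | j) hadj
  · have := circNorm_of_adj_inl he hn b hadj
    simp only [potU, distUU]; split_ifs <;> omega
  · obtain rfl : i = j := hadj
    simp only [potU, distUU, distUV]; split_ifs <;> omega
  · obtain rfl : i = j := hadj
    simp only [potU, distUU, distUV]; split_ifs <;> omega
  · have := circNorm_of_adj_inr he hn b hadj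
    simp only [potU, distUV]; omega

lemma potV_le_potV_add_one (b : ZMod n) :
    ∀ x y, (GP n 2).Adj x y → potV b x ≤ potV b y + 1 := by
  rintro (i | i) (j | j) hadj
  · have := circNorm_of_adj_inl he hn b hadj
    simp only [potV, distUV]; omega
  · obtain rfl : i = j := hadj
    simp only [potV, distUV, distVV]; split_ifs <;> omega
  · obtain rfl : i = j := hadj
    simp only [potV, distUV, distVV]; split_ifs <;> omega
  · have := circNorm_of_adj_inr he hn b hadj
    simp only [potV, distVV]; split_ifs <;> omega

lemma potU_le_dist (b : ZMod n) (x : ZMod n ⊕ ZMod n) :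
    potU b x ≤ (GP n 2).dist (.inl b) x := by
  have := (connected.preconnected x (.inl b)).apply_le_apply_add_dist
    (potU_le_potU_add_one he hn b)
  simpa [potU, circNorm, distUU, dist_comm] using this

lemma potV_le_dist (b : ZMod n) (x : ZMod n ⊕ ZMod n) :
    potV b x ≤ (GP n 2).dist (.inr b) x := by
  have := (connected.preconnected x (.inr b)).apply_le_apply_add_dist
    (potV_le_potV_add_one he hn b)
  simpa [potV, circNorm, distVV, dist_comm] using this

end Potentials

lemma mmd_inl_add_odd {t : ℕ} (ht : Odd t) (h5 : 5 ≤ t) (htk : t < 2 * k) (b : ZMod (4 * k)) :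
    MutuallyMaximallyDistant (GP (4 * k) 2) (.inl b) (.inl (b + t)) := by
  have : NeZero (4 * k) := ⟨by omega⟩
  obtain ⟨m, rfl⟩ := ht
  have hlow : m + 3 ≤ (GP (4 * k) 2).dist (.inl b) (.inl (b + (2 * m + 1 : ℕ))) := by
    have := potU_le_dist (even_four_mul k) (by omega) b (.inl (b + (2 * m + 1 : ℕ)))
    simp only [potU, add_sub_cancel_left, circNorm,
      ZMod.val_natCast_of_lt (by omega : 2 * m + 1 < 4 * k), distUU] at this
    split_ifs at this <;> omega
  refine mmd_inl_of_forall_adj (ZMod.natCast_ne_zero_of_pos_of_lt (by omega) (by omega)) ?_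
  rintro (j | j) hadj
  · obtain ⟨-, rfl | hj⟩ := hadj
    · exact (dist_inl_inl_le m 0 (by push_cast; ring)).trans (by omega)
    · exact (dist_inl_inl_le (m + 1) 0 (by rw [hj]; push_cast; ring)).trans (by omega)
  · obtain rfl : b = j := hadj
    exact (dist_inr_inl_le m 1 (by push_cast; ring)).trans (by omega)

lemma mmd_inl_add_antipodal (hk : 2 ≤ k) (b : ZMod (4 * k)) :
    MutuallyMaximallyDistant (GP (4 * k) 2) (.inl b) (.inl (b + (2 * k : ℕ))) := by
  have : NeZero (4 * k) := ⟨by omega⟩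
  obtain ⟨j, rfl⟩ := Nat.exists_eq_add_of_le hk
  have hzero := ZMod.natCast_self (4 * (2 + j))
  push_cast at hzero
  have hlow : j + 4 ≤ (GP (4 * (2 + j)) 2).dist (.inl b) (.inl (b + (2 * (2 + j) : ℕ))) := by
    have := potU_le_dist (even_four_mul _) (by omega) b (.inl (b + (2 * (2 + j) : ℕ)))
    simp only [potU, add_sub_cancel_left, circNorm,
      ZMod.val_natCast_of_lt (by omega : 2 * (2 + j) < 4 * (2 + j)), distUU] at this
    split_ifs at this <;> omega
  refine mmd_inl_of_forall_adj (ZMod.natCast_ne_zero_of_pos_of_lt (by omega) (by omega)) ?_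
  rintro (i | i) hadj
  · obtain ⟨-, rfl | hi⟩ := hadj
    · exact (dist_inl_inl_le (j + 1) 1 (by push_cast; ring)).trans (by omega)
    · rw [SimpleGraph.dist_comm]
      refine (dist_inl_inl_le (j + 1) 1 ?_).trans (by omega)
      rw [hi]; push_cast; linear_combination -hzero
  · obtain rfl : b = i := hadj
    exact (dist_inr_inl_le (j + 2) 0 (by push_cast; ring)).trans (by omega)

lemma mmd_inr_add (hk : 2 ≤ k) (b : ZMod (4 * k)) :
    MutuallyMaximallyDistant (GP (4 * k) 2) (.inr b) (.inr (b + (2 * k - 1 : ℕ))) := by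
  have : NeZero (4 * k) := ⟨by omega⟩
  obtain ⟨j, rfl⟩ := Nat.exists_eq_add_of_le hk
  have hzero := ZMod.natCast_self (4 * (2 + j))
  push_cast at hzero
  rw [show 2 * (2 + j) - 1 = 2 * j + 3 by omega]
  have hlow : j + 4 ≤ (GP (4 * (2 + j)) 2).dist (.inr b) (.inr (b + (2 * j + 3 : ℕ))) := by
    have := potV_le_dist (even_four_mul _) (by omega) b (.inr (b + (2 * j + 3 : ℕ)))
    simp only [potV, add_sub_cancel_left, circNorm,
      ZMod.val_natCast_of_lt (by omega : 2 * j + 3 < 4 * (2 + j)), distVV] at this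
    split_ifs at this <;> omega
  refine mmd_inr_of_forall_adj (ZMod.natCast_ne_zero_of_pos_of_lt (by omega) (by omega)) ?_
  rintro (i | i) hadj
  · obtain rfl : b = i := hadj
    rw [SimpleGraph.dist_comm]
    refine (dist_inr_inl_le (j + 2) 1 ?_).trans (by omega)
    push_cast; linear_combination -hzero
  · obtain ⟨-, rfl | hi⟩ := hadj
    · exact (dist_inr_inr_le j (by push_cast; ring)).trans (by omega)
    · rw [SimpleGraph.dist_comm]
      refine (dist_inr_inr_le (j + 1) ?_).trans (by omega)
      rw [hi]; push_cast; linear_combination -hzero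

end GP

section OuterGaps

variable {k : ℕ} [NeZero (4 * k)] {A : Finset (ZMod (4 * k))}

lemma card_le_of_val_mod_two_eq (hanti : ∀ a ∈ A, a + (2 * k : ℕ) ∉ A) {p : ℕ}
    (hp : ∀ a ∈ A, a.val % 2 = p) : A.card ≤ k := by
  have hinj : Set.InjOn (fun a : ZMod (4 * k) => a.val / 2 % k) A := by
    intro x hx y hy hxy
    have hxk := ZMod.val_lt x
    have hyk := ZMod.val_lt y
    have hpar := (hp x hx).trans (hp y hy).symm
    rcases Nat.eq_or_eq_add_of_mod_eq (h := k) (x := x.val / 2) (y := y.val / 2)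
      (by omega) (by omega) hxy with h | h | h
    · exact ZMod.val_injective _ (by omega)
    · refine absurd ?_ (hanti y hy)
      rwa [← ZMod.natCast_zmod_val y, ← Nat.cast_add, show y.val + 2 * k = x.val by omega,
        ZMod.natCast_zmod_val]
    · refine absurd ?_ (hanti x hx)
      rwa [← ZMod.natCast_zmod_val x, ← Nat.cast_add, show x.val + 2 * k = y.val by omega,
        ZMod.natCast_zmod_val]
  have hk : 0 < k := Nat.pos_of_ne_zero fun h => NeZero.ne (4 * k) (by omega)
  simpa using Finset.card_le_card_of_injOn _ (fun a _ => Finset.mem_range.2 (Nat.mod_lt _ hk)) hinj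

variable (hodd : ∀ a ∈ A, ∀ t : ℕ, Odd t → 5 ≤ t → t < 2 * k → a + t ∉ A)
include hodd

variable {x y : ZMod (4 * k)}

lemma val_sub_le_three_or_lt (hx : x ∈ A) (hy : y ∈ A) (hxy : (y - x).val % 2 = 1) :
    (y - x).val ≤ 3 ∨ 2 * k < (y - x).val := by
  by_contra! h
  refine hodd x hx (y - x).val (Nat.odd_iff.2 hxy) (by omega) (by omega) ?_
  rwa [ZMod.natCast_zmod_val, add_sub_cancel]

lemma mem_of_val_mod_two_ne (hx : x ∈ A) (hy : y ∈ A) (hxy : x.val % 2 ≠ y.val % 2) :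
    y ∈ ({x + 1, x + 3, x - 1, x - 3} : Finset (ZMod (4 * k))) := by
  have hodd₁ := ZMod.val_sub_mod_two (even_four_mul k) x y
  have hodd₂ := ZMod.val_sub_mod_two (even_four_mul k) y x
  have hsum := ZMod.val_add_eq_or (y - x) (x - y)
  rw [sub_add_sub_cancel, sub_self, ZMod.val_zero] at hsum
  have h₁ := val_sub_le_three_or_lt hodd hx hy (by omega)
  have h₂ := val_sub_le_three_or_lt hodd hy hx (by omega)
  have hy' : y = x + ((y - x).val : ZMod (4 * k)) := by rw [ZMod.natCast_zmod_val]; ring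
  have hx' : x = y + ((x - y).val : ZMod (4 * k)) := by rw [ZMod.natCast_zmod_val]; ring
  rcases (by omega : (y - x).val = 1 ∨ (y - x).val = 3 ∨ (x - y).val = 1 ∨ (x - y).val = 3)
    with h | h | h | h
  · rw [hy', h]; simp
  · rw [hy', h]; simp
  · rw [hx', h]; simp
  · rw [hx', h]; simp

lemma card_le_eight {o e : ZMod (4 * k)} (ho : o ∈ A) (hop : o.val % 2 = 1) (he : e ∈ A)
    (hep : e.val % 2 = 0) : A.card ≤ 8 := by
  have hsub : A ⊆ {o + 1, o + 3, o - 1, o - 3} ∪ {e + 1, e + 3, e - 1, e - 3} := by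
    intro x hx
    rcases Nat.mod_two_eq_zero_or_one x.val with h | h
    · exact Finset.mem_union_left _ (mem_of_val_mod_two_ne hodd ho hx (by omega))
    · exact Finset.mem_union_right _ (mem_of_val_mod_two_ne hodd he hx (by omega))
  exact (Finset.card_le_card hsub).trans
    ((Finset.card_union_le _ _).trans (add_le_add Finset.card_le_four Finset.card_le_four))

lemma card_le_of_forbidden_gaps (hk : 8 ≤ k) (hanti : ∀ a ∈ A, a + (2 * k : ℕ) ∉ A) :
    A.card ≤ k := by
  by_cases hA₁ : ∃ o ∈ A, o.val % 2 = 1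
  · by_cases hA₀ : ∃ e ∈ A, e.val % 2 = 0
    · obtain ⟨⟨o, ho, hop⟩, e, he, hep⟩ := And.intro hA₁ hA₀
      exact (card_le_eight hodd ho hop he hep).trans hk
    · push Not at hA₀
      exact card_le_of_val_mod_two_eq hanti (p := 1) fun a ha => by have := hA₀ a ha; omega
  · push Not at hA₁
    exact card_le_of_val_mod_two_eq hanti (p := 0) fun a ha => by have := hA₁ a ha; omega

end OuterGaps

namespace GP

variable {k : ℕ} {s : Finset (ZMod (4 * k) ⊕ ZMod (4 * k))}

lemma two_mul_le_card_toRight (hS : IsStrongResolvingSet (GP (4 * k) 2) s) (hk : 2 ≤ k) :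
    2 * k ≤ s.toRight.card := by
  have : NeZero (4 * k) := ⟨by omega⟩
  have hzero := ZMod.natCast_self (4 * k)
  push_cast at hzero
  have hunit : IsUnit ((2 * k - 1 : ℕ) : ZMod (4 * k)) := by
    refine IsUnit.of_mul_eq_one ((2 * k - 1 : ℕ) : ZMod (4 * k)) ?_
    rw [Nat.cast_sub (by omega)]
    push_cast
    linear_combination ((k : ZMod (4 * k)) - 1) * hzero
  have := le_two_mul_card_of_forall_mem_or_add_mem (T := s.toRight) (even_four_mul k) hunit
    fun b => by simpa using hS.mem_or_mem connected (mmd_inr_add hk b)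
  omega

lemma three_mul_le_card_toLeft (hS : IsStrongResolvingSet (GP (4 * k) 2) s) (hk : 8 ≤ k) :
    3 * k ≤ s.toLeft.card := by
  have : NeZero (4 * k) := ⟨by omega⟩
  have hA := card_le_of_forbidden_gaps (A := s.toLeftᶜ)
    (fun a ha t ht h5 htk hat => by
      rw [Finset.mem_compl, Finset.mem_toLeft] at ha hat
      exact (hS.mem_or_mem connected (mmd_inl_add_odd ht h5 htk a)).elim ha hat)
    hk (fun a ha hat => by
      rw [Finset.mem_compl, Finset.mem_toLeft] at ha hat
      exact (hS.mem_or_mem connected (mmd_inl_add_antipodal (by omega) a)).elim ha hat)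
  have := Finset.card_add_card_compl s.toLeft
  rw [ZMod.card] at this
  omega

end GP

/-- For `k ≥ 10`, any strong resolving set of `GP (4k) 2` has at least `5k` elements. -/
theorem stmt_12 (k : ℕ) (hk : 10 ≤ k) (S : Set (ZMod (4*k) ⊕ ZMod (4*k)))
    (hS : IsStrongResolvingSet (GP (4*k) 2) S) : 5*k ≤ S.ncard := by
  have : NeZero (4 * k) := ⟨by omega⟩
  lift S to Finset (ZMod (4*k) ⊕ ZMod (4*k)) using S.toFinite
  rw [Set.ncard_coe_finset, ← Finset.card_toLeft_add_card_toRight]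
  have := GP.three_mul_le_card_toLeft hS (by omega)
  have := GP.two_mul_le_card_toRight hS (by omega)
  omega
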